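/- arXiv:1304.3613 — 4 statements merged into one kernel-verified Lean document; each statement's English description precedes it below -/
import Mathlib

section
/- Let Π be an instance of NotAllEqual 3-SAT with n clauses and G(Π)=(V,E), b, r the associated construction. If E admits a (b,r)-partition, then the coloring assigning to each variable x the color of any edge u^C_x v^C_x (for any original clause C containing x) is well defined and satisfies Π, i.e., every clause of Π contains both a blue and a red variable. -/
/-!
Common definitions for formalizing the NP-completeness reduction from
NotAllEqual 3-SAT to (b,r)-partitions of graphs.

An instance of NotAllEqual 3-SAT with variables in `α` and `n` clauses is
given by `cl : Fin n → Fin 3 → α`, clause `i` consisting of the three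
(distinct) variables `cl i 0, cl i 1, cl i 2`.

The vertex set of the associated graph `G(Π)`: the special vertex `s`,
the `u`-vertices `u i o j` and the `v`-vertices `v i o j`, where `i : Fin n`
is a clause index, `o : Bool` tells whether we are in the gadget of the
original clause (`false`) or of its copy (`true`), and `j : Fin 3` is the
position of a variable inside the clause.
-/

inductive GVert (n : ℕ) : Type
  | s : GVert n
  | u : Fin n → Bool → Fin 3 → GVert n
  | v : Fin n → Bool → Fin 3 → GVert n
  deriving DecidableEq

/-- The occurrences of the variable `x`: the pairs (clause index, position)
where `x` appears. -/
def occs {α : Type*} [DecidableEq α] {n : ℕ} (cl : Fin n → Fin 3 → α) (x : α) :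
    Finset (Fin n × Fin 3) :=
  Finset.univ.filter (fun p => cl p.1 p.2 = x)

/-- The cyclic successor of an occurrence `p` among the occurrences of the
variable sitting at `p`; this is used to build the cycle `Δ_x`. -/
noncomputable def nextOcc {α : Type*} [DecidableEq α] {n : ℕ}
    (cl : Fin n → Fin 3 → α) (p : Fin n × Fin 3) : Fin n × Fin 3 :=
  (occs cl (cl p.1 p.2)).toList.next p (by simp [occs, Finset.mem_toList])

/-- The edges of `G(Π)`: the star at `s`, the triangles on `U^C`, the
matchings `E^C`, and the cycles `Δ_x` (which alternate `v`-vertices of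
original-clause gadgets and of copy gadgets; the cycle for the variable `x`
is `v p₁ false, v p₁ true, v p₂ false, v p₂ true, …` over the occurrences
`p₁, p₂, …` of `x` in cyclic order). -/
inductive EdgeSpec {α : Type*} [DecidableEq α] {n : ℕ} (cl : Fin n → Fin 3 → α) :
    GVert n → GVert n → Prop
  | star (i : Fin n) (o : Bool) (j : Fin 3) : EdgeSpec cl .s (.u i o j)
  | tri (i : Fin n) (o : Bool) {j j' : Fin 3} (h : j ≠ j') :
      EdgeSpec cl (.u i o j) (.u i o j')
  | mat (i : Fin n) (o : Bool) (j : Fin 3) : EdgeSpec cl (.u i o j) (.v i o j)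
  | cycA (p : Fin n × Fin 3) : EdgeSpec cl (.v p.1 false p.2) (.v p.1 true p.2)
  | cycB (p : Fin n × Fin 3) :
      EdgeSpec cl (.v p.1 true p.2) (.v (nextOcc cl p).1 false (nextOcc cl p).2)

/-- The graph `G(Π)` associated to the NotAllEqual 3-SAT instance. -/
noncomputable def gadgetGraph {α : Type*} [DecidableEq α] {n : ℕ}
    (cl : Fin n → Fin 3 → α) : SimpleGraph (GVert n) :=
  SimpleGraph.fromRel (EdgeSpec cl)

/-- The blue outdegree prescription `b`. -/
def bvec (n : ℕ) : GVert n → ℕ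
  | .s => 3 * n
  | .u _ _ _ => 1
  | .v _ o _ => if o then 0 else 1

/-- The red outdegree prescription `r`. -/
def rvec (n : ℕ) : GVert n → ℕ
  | .s => 3 * n
  | .u _ _ _ => 1
  | .v _ o _ => if o then 1 else 0

/-- `dir` is an orientation of the edge set `F`: every directed pair lies in
`F`, and every edge of `F` gets exactly one direction. -/
def IsOrientation {V : Type*} (F : Set (Sym2 V)) (dir : V → V → Prop) : Prop :=
  (∀ a b, dir a b → s(a, b) ∈ F) ∧
    ∀ a b, s(a, b) ∈ F → (dir a b ∨ dir b a) ∧ ¬(dir a b ∧ dir b a)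

/-- `dir` is an `m`-orientation of `F`: an orientation in which exactly `m v`
arcs leave each vertex `v`. -/
def IsMOrientation {V : Type*} (F : Set (Sym2 V)) (m : V → ℕ)
    (dir : V → V → Prop) : Prop :=
  IsOrientation F dir ∧ ∀ v, Nat.card {w // dir v w} = m v

/-- `B` and `R` partition the edges of `G` into two spanning trees. -/
def IsTreePartition {V : Type*} (G B R : SimpleGraph V) : Prop :=
  B ≤ G ∧ R ≤ G ∧ B.IsTree ∧ R.IsTree ∧
    Disjoint B.edgeSet R.edgeSet ∧ B.edgeSet ∪ R.edgeSet = G.edgeSet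

/-- `(B, R)` is a `(b,r)`-partition of (the edge set of) `G`: a partition
into a blue spanning tree having a `b`-orientation and a red spanning tree
having an `r`-orientation. -/
def IsBRPartition {V : Type*} (G : SimpleGraph V) (b r : V → ℕ)
    (B R : SimpleGraph V) : Prop :=
  IsTreePartition G B R ∧
    (∃ d, IsMOrientation B.edgeSet b d) ∧ ∃ d, IsMOrientation R.edgeSet r d

/-- `G` admits some `(b,r)`-partition. -/
def HasBRPartition {V : Type*} (G : SimpleGraph V) (b r : V → ℕ) : Prop :=
  ∃ B R, IsBRPartition G b r B R

/-- The blue/red coloring `c` (`true` = blue, `false` = red) satisfies the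
NotAllEqual 3-SAT instance: every clause contains a blue and a red variable. -/
def NAESatisfies {α : Type*} {n : ℕ} (cl : Fin n → Fin 3 → α) (c : α → Bool) :
    Prop :=
  ∀ i : Fin n, (∃ j, c (cl i j) = true) ∧ ∃ j, c (cl i j) = false

/-- The matching edge `u^C_x v^C_x` at occurrence `p`, in the original gadget
(`o = false`) or the copy gadget (`o = true`). -/
def mEdge {n : ℕ} (p : Fin n × Fin 3) (o : Bool) : Sym2 (GVert n) :=
  s(GVert.u p.1 o p.2, GVert.v p.1 o p.2)


/-!
Fix a `b`-orientation of the blue tree and an `r`-orientation of the red one. The `6n` arcs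
leaving `s` use all `6n` edges at `s`, so no arc enters `s` and the two out-arcs of every
`u`-vertex stay in its gadget. The six out-arcs of a triangle `U^C` then lie on six distinct
edges among the six edges of the triangle and of `E^C`, so every edge of `E^C` is oriented
from `u` to `v`; and the three out-arcs of one colour cannot all lie in the triangle, which
would contain a cycle of that colour, so `E^C` is never monochromatic.

Hence every `v`-vertex has a single out-arc, lying on `Δ_x` (blue at original gadgets, red at
copies), which forces `Δ_x` to be oriented cyclically and coloured alternately. The tree of
the colour of an edge of `Δ_x` is connected, so one of the two matching edges at the ends of
that edge has its colour; a count over all these edges shows that exactly one does. Going once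
around `Δ_x`, the colour of `u^C_x v^C_x` is therefore the same for every original clause `C`
containing `x`.
-/

open SimpleGraph

namespace IsOrientation

variable {V : Type*} {F : Set (Sym2 V)} {d : V → V → Prop} {a b c e : V}

lemma mem (hd : IsOrientation F d) (h : d a b) : s(a, b) ∈ F := hd.1 a b h

lemma asymm (hd : IsOrientation F d) (h : d a b) : ¬d b a :=
  fun h' => (hd.2 a b (hd.mem h)).2 ⟨h, h'⟩

lemma dir_or_dir (hd : IsOrientation F d) (h : s(a, b) ∈ F) : d a b ∨ d b a :=
  (hd.2 a b h).1

lemma fst_eq_of_mk_eq (hd : IsOrientation F d) (h : d a b) (h' : d c e)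
    (he : s(a, b) = s(c, e)) : a = c := by
  rcases Sym2.eq_iff.1 he with ⟨rfl, -⟩ | ⟨rfl, rfl⟩
  · rfl
  · exact absurd h' (hd.asymm h)

lemma not_dir_of_or {T T' : SimpleGraph V} {d' : V → V → Prop}
    (hd : IsOrientation T.edgeSet d) (hd' : IsOrientation T'.edgeSet d')
    (hdisj : Disjoint T.edgeSet T'.edgeSet) (h : d b a ∨ d' b a) : ¬d a b := by
  intro hab
  rcases h with h | h
  · exact hd.asymm hab h
  · exact Set.disjoint_left.1 hdisj (hd.mem hab) (Sym2.eq_swap ▸ hd'.mem h)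

end IsOrientation

namespace IsMOrientation

variable {V : Type*} {F : Set (Sym2 V)} {m : V → ℕ} {d : V → V → Prop} {a b c : V}

lemma exists_of_eq_one (hd : IsMOrientation F m d) (ha : m a = 1) : ∃ b, d a b := by
  have := hd.2 a
  rw [ha, Nat.card_eq_one_iff_unique] at this
  exact ⟨_, this.2.some.2⟩

lemma eq_of_eq_one (hd : IsMOrientation F m d) (ha : m a = 1) (hb : d a b) (hc : d a c) :
    b = c := by
  have := hd.2 a
  rw [ha, Nat.card_eq_one_iff_unique] at this
  exact congrArg Subtype.val (this.1.elim ⟨b, hb⟩ ⟨c, hc⟩)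

lemma not_of_eq_zero [Finite V] (hd : IsMOrientation F m d) (ha : m a = 0) : ¬d a b := by
  have := hd.2 a
  rw [ha, Nat.card_eq_zero] at this
  exact fun hb => this.elim (fun h => h.elim ⟨b, hb⟩) (fun h => h.not_finite Subtype.finite)

end IsMOrientation

lemma SimpleGraph.Connected.exists_adj_of_mem_of_notMem {V : Type*} {G : SimpleGraph V}
    (hG : G.Connected) {S : Set V} {a b : V} (ha : a ∈ S) (hb : b ∉ S) :
    ∃ x ∈ S, ∃ y ∉ S, G.Adj x y := by
  obtain ⟨d, -, hd, hd'⟩ := (hG.preconnected a b).some.exists_boundary_dart S ha hb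
  exact ⟨_, hd, _, hd', d.adj⟩

lemma Fin.three_apply_eq_or_apply_eq (f : Fin 3 → Fin 3) (hf : ∀ j, f j ≠ j)
    (hf₂ : ∀ j, f (f j) ≠ j) {j k : Fin 3} (hjk : j ≠ k) : f j = k ∨ f k = j := by
  revert f j k; decide

instance (n : ℕ) : Finite (GVert n) :=
  Finite.of_injective (β := Option (Bool × Fin n × Bool × Fin 3))
    (fun | .s => none | .u i o j => some (false, i, o, j) | .v i o j => some (true, i, o, j))
    (by rintro (_ | ⟨⟩ | ⟨⟩) (_ | ⟨⟩ | ⟨⟩) h <;> simp_all)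

noncomputable instance (n : ℕ) : Fintype (GVert n) := Fintype.ofFinite _

section Adjacency

variable {α : Type*} [DecidableEq α] {n : ℕ} {cl : Fin n → Fin 3 → α}

lemma gadgetGraph_adj {a b : GVert n} :
    (gadgetGraph cl).Adj a b ↔ a ≠ b ∧ (EdgeSpec cl a b ∨ EdgeSpec cl b a) :=
  fromRel_adj _ _ _

lemma gadgetGraph_adj_of_edgeSpec {a b : GVert n} (hab : a ≠ b) (h : EdgeSpec cl a b) :
    (gadgetGraph cl).Adj a b :=
  gadgetGraph_adj.2 ⟨hab, .inl h⟩

lemma exists_eq_u_of_adj_s {w : GVert n} (h : (gadgetGraph cl).Adj .s w) :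
    ∃ i o j, w = .u i o j := by
  obtain ⟨-, h | h⟩ := gadgetGraph_adj.1 h <;> cases h
  exact ⟨_, _, _, rfl⟩

lemma adj_u_cases {i : Fin n} {o : Bool} {j : Fin 3} {w : GVert n}
    (h : (gadgetGraph cl).Adj (.u i o j) w) :
    w = .s ∨ (∃ k, k ≠ j ∧ w = .u i o k) ∨ w = .v i o j := by
  obtain ⟨-, h | h⟩ := gadgetGraph_adj.1 h <;> cases h <;> simp_all [eq_comm]

lemma adj_v_false_cases {p : Fin n × Fin 3} {w : GVert n}
    (h : (gadgetGraph cl).Adj (.v p.1 false p.2) w) :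
    w = .u p.1 false p.2 ∨ w = .v p.1 true p.2 ∨
      ∃ q, nextOcc cl q = p ∧ w = .v q.1 true q.2 := by
  obtain ⟨i, j⟩ := p
  generalize hx : GVert.v i false j = x at h
  obtain ⟨-, h | h⟩ := gadgetGraph_adj.1 h <;> cases h <;> simp_all [Prod.ext_iff]

lemma adj_v_true_cases {p : Fin n × Fin 3} {w : GVert n}
    (h : (gadgetGraph cl).Adj (.v p.1 true p.2) w) :
    w = .u p.1 true p.2 ∨ w = .v p.1 false p.2 ∨
      w = .v (nextOcc cl p).1 false (nextOcc cl p).2 := by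
  obtain ⟨i, j⟩ := p
  generalize hx : GVert.v i true j = x at h
  obtain ⟨-, h | h⟩ := gadgetGraph_adj.1 h <;> cases h <;> simp_all

end Adjacency

section Occurrences

variable {α : Type*} [DecidableEq α] {n : ℕ} {cl : Fin n → Fin 3 → α}

lemma mem_occs {x : α} {p : Fin n × Fin 3} : p ∈ occs cl x ↔ cl p.1 p.2 = x := by
  simp [occs]

lemma nextOcc_eq_formPerm {x : α} {p : Fin n × Fin 3} (hp : p ∈ occs cl x) :
    nextOcc cl p = (occs cl x).toList.formPerm p := by
  obtain rfl := mem_occs.1 hp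
  exact (List.formPerm_apply_mem_eq_next (Finset.nodup_toList _) p _).symm

lemma cl_nextOcc (p : Fin n × Fin 3) : cl (nextOcc cl p).1 (nextOcc cl p).2 = cl p.1 p.2 := by
  rw [← mem_occs, nextOcc_eq_formPerm (mem_occs.2 rfl), ← Finset.mem_toList]
  exact List.formPerm_apply_mem_of_mem (Finset.mem_toList.2 (mem_occs.2 rfl))

lemma nextOcc_injective : Function.Injective (nextOcc cl) := by
  intro p q h
  have hq : q ∈ occs cl (cl p.1 p.2) := by
    rw [mem_occs, ← cl_nextOcc (cl := cl) q, ← h, cl_nextOcc (cl := cl)]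
  rw [nextOcc_eq_formPerm (mem_occs.2 rfl), nextOcc_eq_formPerm hq] at h
  exact (List.formPerm _).injective h

/-- The occurrences of a variable form a single cycle of `nextOcc`. -/
lemma iff_of_cl_eq {Q : Fin n × Fin 3 → Prop} (hQ : ∀ p, Q (nextOcc cl p) ↔ Q p)
    {p q : Fin n × Fin 3} (hpq : cl p.1 p.2 = cl q.1 q.2) : Q p ↔ Q q := by
  set l := (occs cl (cl q.1 q.2)).toList
  have hl : l.Nodup := Finset.nodup_toList _
  have hf : ∀ z, Q (l.formPerm z) ↔ Q z := by
    intro z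
    by_cases hz : z ∈ l
    · rw [← nextOcc_eq_formPerm (Finset.mem_toList.1 hz), hQ]
    · rw [List.formPerm_apply_of_notMem hz]
  have hpow : ∀ k z, Q ((l.formPerm ^ k) z) ↔ Q z := by
    intro k
    induction k with
    | zero => simp
    | succ k ih => intro z; rw [pow_succ', Equiv.Perm.mul_apply, hf, ih]
  have hq : q ∈ l := Finset.mem_toList.2 (mem_occs.2 rfl)
  have h0 : 0 < l.length := List.length_pos_of_mem hq
  have hfirst : ∀ r ∈ l, Q r ↔ Q l[0] := by
    intro r hr
    obtain ⟨i, hi, rfl⟩ := List.mem_iff_getElem.1 hr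
    have := List.formPerm_pow_apply_getElem l hl i 0 h0
    simp only [Nat.zero_add, Nat.mod_eq_of_lt hi] at this
    rw [← this, hpow]
  rw [hfirst p (Finset.mem_toList.2 (mem_occs.2 hpq)), hfirst q hq]

end Occurrences

open Finset in
/-- Counting: `¬T ⊆ A` and `T ⊆ ¬A ∘ σ` are inclusions between sets of complementary sizes,
hence equalities. -/
lemma Equiv.Perm.apply_iff_of_forall_or {P : Type*} [Fintype P] (σ : Equiv.Perm P)
    {A T : P → Prop} (h₁ : ∀ p, A p ∨ T p) (h₂ : ∀ p, ¬T p ∨ ¬A (σ p)) (p : P) :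
    A (σ p) ↔ A p := by
  classical
  have hsub₁ : univ.filter (fun p => ¬T p) ⊆ univ.filter A := by
    intro p; simpa using (h₁ p).resolve_right
  have hsub₂ : univ.filter T ⊆ univ.filter (fun p => ¬A (σ p)) := by
    intro p; simpa using fun h => (h₂ p).resolve_left (not_not_intro h)
  have hσ : #(univ.filter fun p => ¬A (σ p)) = #(univ.filter fun p => ¬A p) := by
    simpa only [Fintype.card_subtype] using Fintype.card_congr
      (σ.subtypeEquiv (p := fun p => ¬A (σ p)) (q := fun p => ¬A p) fun _ => Iff.rfl)
  have := card_le_card hsub₁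
  have := card_le_card hsub₂
  have := card_filter_add_card_filter_not (s := univ) T
  have := card_filter_add_card_filter_not (s := univ) A
  have e₁ := Finset.ext_iff.1 (eq_of_subset_of_card_le hsub₁ (by omega)) p
  have e₂ := Finset.ext_iff.1 (eq_of_subset_of_card_le hsub₂ (by omega)) p
  simp only [mem_filter, mem_univ, true_and] at e₁ e₂
  tauto

namespace IsTreePartition

variable {V : Type*} {G B R : SimpleGraph V} {e : Sym2 V}

lemma notMem_right (hP : IsTreePartition G B R) (h : e ∈ B.edgeSet) : e ∉ R.edgeSet :=
  Set.disjoint_left.1 hP.2.2.2.2.1 h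

lemma mem_right_iff (hP : IsTreePartition G B R) (he : e ∈ G.edgeSet) :
    e ∈ R.edgeSet ↔ e ∉ B.edgeSet := by
  rw [← hP.2.2.2.2.2] at he
  exact ⟨fun h hB => hP.notMem_right hB h, he.resolve_left⟩

end IsTreePartition

section Gadget

variable {α : Type*} [DecidableEq α] {n : ℕ} {cl : Fin n → Fin 3 → α}

def gadgetEdge (i : Fin n) (o : Bool) : Fin 3 × Bool → Sym2 (GVert n)
  | (j, false) => s(.u i o j, .u i o (j + 1))
  | (j, true) => mEdge (i, j) o

lemma dir_u_cases {T : SimpleGraph (GVert n)} {d : GVert n → GVert n → Prop}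
    (hTG : T ≤ gadgetGraph cl) (hd : IsOrientation T.edgeSet d) {i : Fin n} {o : Bool}
    {j : Fin 3} {w : GVert n} (hs : ¬d (.u i o j) .s) (h : d (.u i o j) w) :
    (∃ k, k ≠ j ∧ w = .u i o k) ∨ w = .v i o j := by
  rcases adj_u_cases (hTG (hd.mem h)) with rfl | h' | h'
  · exact absurd h hs
  · exact .inl h'
  · exact .inr h'

lemma mk_mem_range_gadgetEdge {T : SimpleGraph (GVert n)} {d : GVert n → GVert n → Prop}
    (hTG : T ≤ gadgetGraph cl) (hd : IsOrientation T.edgeSet d) {i : Fin n} {o : Bool}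
    {j : Fin 3} {w : GVert n} (hs : ¬d (.u i o j) .s) (h : d (.u i o j) w) :
    s(.u i o j, w) ∈ Set.range (gadgetEdge i o) := by
  rcases dir_u_cases hTG hd hs h with ⟨k, hk, rfl⟩ | rfl
  · have : ∀ a b : Fin 3, a ≠ b → a = b + 1 ∨ b = a + 1 := by decide
    rcases this k j hk with rfl | rfl
    · exact ⟨(j, false), rfl⟩
    · exact ⟨(k, false), Sym2.eq_swap⟩
  · exact ⟨(j, true), rfl⟩

/-- Three out-arcs inside the triangle `U^C` would close a cycle of the tree. -/
lemma exists_mEdge_mem_of_isAcyclic {T : SimpleGraph (GVert n)} {m : GVert n → ℕ}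
    {d : GVert n → GVert n → Prop} (hT : T.IsAcyclic) (hTG : T ≤ gadgetGraph cl)
    (hd : IsMOrientation T.edgeSet m d) {i : Fin n} {o : Bool} (hm : ∀ j, m (.u i o j) = 1)
    (hs : ∀ j, ¬d (.u i o j) .s) : ∃ j, mEdge (i, j) o ∈ T.edgeSet := by
  by_contra! hno
  have hout : ∀ j, ∃ k, k ≠ j ∧ d (.u i o j) (.u i o k) := by
    intro j
    obtain ⟨w, hw⟩ := hd.exists_of_eq_one (hm j)
    rcases dir_u_cases hTG hd.1 (hs j) hw with ⟨k, hk, rfl⟩ | rfl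
    · exact ⟨k, hk, hw⟩
    · exact absurd (hd.1.mem hw) (hno j)
  choose f hf hfd using hout
  have hf₂ : ∀ j, f (f j) ≠ j := fun j h =>
    hd.1.asymm (hfd j) (by simpa only [h] using hfd (f j))
  have hadj : ∀ j k, j ≠ k → T.Adj (.u i o j) (.u i o k) := by
    intro j k hjk
    rcases Fin.three_apply_eq_or_apply_eq f hf hf₂ hjk with h | h
    · exact h ▸ hd.1.mem (hfd j)
    · exact (h ▸ hd.1.mem (hfd k) : T.Adj _ _).symm
  exact hT.cliqueFree le_rfl _
    (is3Clique_triple_iff.2 ⟨hadj 0 1 (by decide), hadj 0 2 (by decide), hadj 1 2 (by decide)⟩)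

end Gadget

section Cycle

variable {α : Type*} [DecidableEq α] {n : ℕ} {cl : Fin n → Fin 3 → α}

def cycAEdge (p : Fin n × Fin 3) : Sym2 (GVert n) := s(.v p.1 false p.2, .v p.1 true p.2)

noncomputable def cycBEdge (cl : Fin n → Fin 3 → α) (p : Fin n × Fin 3) : Sym2 (GVert n) :=
  s(.v p.1 true p.2, .v (nextOcc cl p).1 false (nextOcc cl p).2)

lemma mEdge_mem_edgeSet (p : Fin n × Fin 3) (o : Bool) :
    mEdge p o ∈ (gadgetGraph cl).edgeSet :=
  gadgetGraph_adj_of_edgeSpec (by simp) (.mat p.1 o p.2)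

lemma cycAEdge_mem_edgeSet (p : Fin n × Fin 3) : cycAEdge p ∈ (gadgetGraph cl).edgeSet :=
  gadgetGraph_adj_of_edgeSpec (by simp) (.cycA p)

lemma cycBEdge_mem_edgeSet (p : Fin n × Fin 3) : cycBEdge cl p ∈ (gadgetGraph cl).edgeSet :=
  gadgetGraph_adj_of_edgeSpec (by simp) (.cycB p)

/-- `T` is connected, and the only edges leaving the two `v`-vertices at `p` are their matching
edges and `cycB` edges. -/
lemma mEdge_mem_or_of_cycBEdge_notMem {T : SimpleGraph (GVert n)} (hTG : T ≤ gadgetGraph cl)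
    (hT : T.Connected) {p : Fin n × Fin 3} (hp : cycBEdge cl p ∉ T.edgeSet)
    (hq : ∀ q, nextOcc cl q = p → cycBEdge cl q ∉ T.edgeSet) :
    mEdge p false ∈ T.edgeSet ∨ mEdge p true ∈ T.edgeSet := by
  obtain ⟨x, hx, y, hy, hxy⟩ := hT.exists_adj_of_mem_of_notMem (b := .s)
    (S := {.v p.1 false p.2, .v p.1 true p.2}) (Set.mem_insert _ _) (by simp)
  rcases hx with rfl | rfl
  · rcases adj_v_false_cases (hTG hxy) with rfl | rfl | ⟨q, rfl, rfl⟩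
    · exact .inl hxy.symm
    · simp at hy
    · exact absurd hxy.symm (hq q rfl)
  · rcases adj_v_true_cases (hTG hxy) with rfl | rfl | rfl
    · exact .inr hxy.symm
    · simp at hy
    · exact absurd hxy hp

lemma mEdge_mem_or_of_cycAEdge_notMem {T : SimpleGraph (GVert n)} (hTG : T ≤ gadgetGraph cl)
    (hT : T.Connected) {p : Fin n × Fin 3} (hp : cycAEdge p ∉ T.edgeSet)
    (hp' : cycAEdge (nextOcc cl p) ∉ T.edgeSet) :
    mEdge p true ∈ T.edgeSet ∨ mEdge (nextOcc cl p) false ∈ T.edgeSet := by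
  obtain ⟨x, hx, y, hy, hxy⟩ := hT.exists_adj_of_mem_of_notMem (b := .s)
    (S := {.v p.1 true p.2, .v (nextOcc cl p).1 false (nextOcc cl p).2}) (Set.mem_insert _ _)
    (by simp)
  rcases hx with rfl | rfl
  · rcases adj_v_true_cases (hTG hxy) with rfl | rfl | rfl
    · exact .inl hxy.symm
    · exact absurd hxy.symm hp
    · simp at hy
  · rcases adj_v_false_cases (hTG hxy) with rfl | rfl | ⟨q, hq, rfl⟩
    · exact .inr hxy.symm
    · exact absurd hxy hp'
    · obtain rfl := nextOcc_injective hq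
      simp at hy

end Cycle

section Partition

open Finset

variable {α : Type*} [DecidableEq α] {n : ℕ} {cl : Fin n → Fin 3 → α}
  {B R : SimpleGraph (GVert n)} {dB dR : GVert n → GVert n → Prop}
  (hP : IsTreePartition (gadgetGraph cl) B R) (hB : IsMOrientation B.edgeSet (bvec n) dB)
  (hR : IsMOrientation R.edgeSet (rvec n) dR)
include hP hB hR

/-- `s` has `3n + 3n` out-arcs and only `6n` neighbours. -/
lemma dir_s_of_adj_s {w : GVert n} (h : (gadgetGraph cl).Adj .s w) : dB .s w ∨ dR .s w := by
  classical
  have hN : #(univ.filter ((gadgetGraph cl).Adj .s)) ≤ 3 * n + 3 * n :=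
    calc _ ≤ #(univ.image fun t : Fin n × Bool × Fin 3 => GVert.u t.1 t.2.1 t.2.2) := by
          refine card_le_card fun w hw => ?_
          obtain ⟨i, o, j, rfl⟩ := exists_eq_u_of_adj_s (mem_filter.1 hw).2
          exact mem_image.2 ⟨(i, o, j), mem_univ _, rfl⟩
      _ ≤ 3 * n + 3 * n := card_image_le.trans_eq (by simp; ring)
  have hcard {d : GVert n → GVert n → Prop} {T : SimpleGraph (GVert n)} {m : GVert n → ℕ}
      (hd : IsMOrientation T.edgeSet m d) : #(univ.filter (d .s)) = m .s := by
    rw [← Fintype.card_subtype, ← Nat.card_eq_fintype_card, hd.2]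
  have hsub :
      univ.filter (dB .s) ∪ univ.filter (dR .s) ⊆ univ.filter ((gadgetGraph cl).Adj .s) := by
    intro w hw
    simp only [mem_union, mem_filter, mem_univ, true_and] at hw ⊢
    exact hw.elim (fun h => hP.1 (hB.1.mem h)) (fun h => hP.2.1 (hR.1.mem h))
  have hdisj : Disjoint (univ.filter (dB .s)) (univ.filter (dR .s)) :=
    disjoint_filter.2 fun _ _ hb hr => hP.notMem_right (hB.1.mem hb) (hR.1.mem hr)
  have heq := eq_of_subset_of_card_le hsub (by
    rw [card_union_of_disjoint hdisj, hcard hB, hcard hR]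
    exact hN)
  have hw : w ∈ univ.filter ((gadgetGraph cl).Adj .s) := by simpa using h
  rw [← heq] at hw
  simpa using hw

lemma not_dir_to_s (a : GVert n) : ¬dB a .s ∧ ¬dR a .s := by
  have hadj {T : SimpleGraph (GVert n)} {d} (hTG : T ≤ gadgetGraph cl)
      (hd : IsOrientation T.edgeSet d) (h : d a .s) : (gadgetGraph cl).Adj .s a :=
    (hTG (hd.mem h)).symm
  refine ⟨fun h => ?_, fun h => ?_⟩
  · exact hB.1.not_dir_of_or hR.1 hP.2.2.2.2.1 (dir_s_of_adj_s hP hB hR (hadj hP.1 hB.1 h)) h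
  · exact hR.1.not_dir_of_or hB.1 hP.2.2.2.2.1.symm
      (dir_s_of_adj_s hP hB hR (hadj hP.2.1 hR.1 h)).symm h

/-- The six out-arcs of `U^C` lie on distinct edges of the six-edge gadget, so they use all
of them, each matching edge being oriented from `u` to `v`. -/
lemma not_dir_v_u {i : Fin n} {o : Bool} {j : Fin 3}
    (hvu : dB (.v i o j) (.u i o j) ∨ dR (.v i o j) (.u i o j)) : False := by
  classical
  choose wB hwB using fun k => hB.exists_of_eq_one (show bvec n (.u i o k) = 1 from rfl)
  choose wR hwR using fun k => hR.exists_of_eq_one (show rvec n (.u i o k) = 1 from rfl)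
  let g : Fin 3 ⊕ Fin 3 → Sym2 (GVert n) :=
    Sum.elim (fun k => s(.u i o k, wB k)) (fun k => s(.u i o k, wR k))
  have hg : Function.Injective g := by
    rintro (k | k) (l | l) h <;> simp only [g, Sum.elim_inl, Sum.elim_inr] at h
    · cases hB.1.fst_eq_of_mk_eq (hwB k) (hwB l) h; rfl
    · exact (hP.notMem_right (hB.1.mem (hwB k)) (h ▸ hR.1.mem (hwR l))).elim
    · exact (hP.notMem_right (hB.1.mem (hwB l)) (h ▸ hR.1.mem (hwR k))).elim
    · cases hR.1.fst_eq_of_mk_eq (hwR k) (hwR l) h; rfl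
  have hne : ∀ x, g x ≠ mEdge (i, j) o := by
    rintro (k | k) h <;> rw [mEdge, Sym2.eq_swap] at h <;> rcases hvu with hvu | hvu
    · cases hB.1.fst_eq_of_mk_eq (hwB k) hvu h
    · exact hP.notMem_right (h ▸ hB.1.mem (hwB k)) (hR.1.mem hvu)
    · exact hP.notMem_right (hB.1.mem hvu) (h ▸ hR.1.mem (hwR k))
    · cases hR.1.fst_eq_of_mk_eq (hwR k) hvu h
  have hmaps : ∀ x, g x ∈ (univ.image (gadgetEdge i o)).erase (mEdge (i, j) o) := by
    rintro (k | k) <;> refine mem_erase.2 ⟨hne _, mem_image_univ_iff_mem_range.2 ?_⟩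
    · exact mk_mem_range_gadgetEdge hP.1 hB.1 (not_dir_to_s hP hB hR _).1 (hwB k)
    · exact mk_mem_range_gadgetEdge hP.2.1 hR.1 (not_dir_to_s hP hB hR _).2 (hwR k)
  have hcard := card_le_card_of_injOn (s := univ) g (fun x _ => hmaps x) hg.injOn
  rw [card_erase_of_mem (a := mEdge (i, j) o) (mem_image_univ_iff_mem_range.2 ⟨(j, true), rfl⟩),
    card_univ, Fintype.card_sum, Fintype.card_fin] at hcard
  have h6 : #(univ.image (gadgetEdge i o)) ≤ 6 := card_image_le.trans_eq (by simp)
  omega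

lemma dirB_v_false_cases {p : Fin n × Fin 3} {w : GVert n} (h : dB (.v p.1 false p.2) w) :
    w = .v p.1 true p.2 ∨ ∃ q, nextOcc cl q = p ∧ w = .v q.1 true q.2 := by
  rcases adj_v_false_cases (hP.1 (hB.1.mem h)) with rfl | h' | h'
  · exact (not_dir_v_u hP hB hR (.inl h)).elim
  · exact .inl h'
  · exact .inr h'

lemma dirR_v_true_cases {p : Fin n × Fin 3} {w : GVert n} (h : dR (.v p.1 true p.2) w) :
    w = .v p.1 false p.2 ∨ w = .v (nextOcc cl p).1 false (nextOcc cl p).2 := by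
  rcases adj_v_true_cases (hP.2.1 (hR.1.mem h)) with rfl | h' | h'
  · exact (not_dir_v_u hP hB hR (.inr h)).elim
  · exact .inl h'
  · exact .inr h'

/-- Otherwise the blue out-arc of the original `v`-vertex at `p` and the red out-arc of its copy
both run along `cycAEdge p`. -/
lemma nextOcc_ne_self (p : Fin n × Fin 3) : nextOcc cl p ≠ p := by
  intro hp
  obtain ⟨w, hw⟩ := hB.exists_of_eq_one (show bvec n (.v p.1 false p.2) = 1 from rfl)
  obtain ⟨w', hw'⟩ := hR.exists_of_eq_one (show rvec n (.v p.1 true p.2) = 1 from rfl)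
  obtain rfl : w = .v p.1 true p.2 := by
    rcases dirB_v_false_cases hP hB hR hw with h | ⟨q, hq, h⟩
    · exact h
    · rwa [nextOcc_injective (hq.trans hp.symm)] at h
  obtain rfl : w' = .v p.1 false p.2 := by
    rcases dirR_v_true_cases hP hB hR hw' with h | h
    · exact h
    · rwa [hp] at h
  exact hP.notMem_right (hB.1.mem hw) (by rw [Sym2.eq_swap]; exact hR.1.mem hw')

lemma cycBEdge_mem_iff (p : Fin n × Fin 3) :
    cycBEdge cl p ∈ B.edgeSet ↔ cycAEdge p ∉ B.edgeSet := by
  constructor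
  · intro hl hr
    obtain ⟨w, hw⟩ := hR.exists_of_eq_one (show rvec n (.v p.1 true p.2) = 1 from rfl)
    rcases dirR_v_true_cases hP hB hR hw with rfl | rfl
    · exact hP.notMem_right hr (by rw [cycAEdge, Sym2.eq_swap]; exact hR.1.mem hw)
    · exact hP.notMem_right hl (hR.1.mem hw)
  · intro hr
    by_contra hl
    have hrR := (hP.mem_right_iff (cycAEdge_mem_edgeSet p)).2 hr
    have hlR := (hP.mem_right_iff (cycBEdge_mem_edgeSet p)).2 hl
    have h₁ := (hR.1.dir_or_dir hrR).resolve_left (hR.not_of_eq_zero rfl)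
    have h₂ := (hR.1.dir_or_dir hlR).resolve_right (hR.not_of_eq_zero rfl)
    have := hR.eq_of_eq_one rfl h₁ h₂
    exact nextOcc_ne_self hP hB hR p (by simpa [Prod.ext_iff, eq_comm] using this)

lemma cycAEdge_nextOcc_mem_iff (p : Fin n × Fin 3) :
    cycAEdge (nextOcc cl p) ∈ B.edgeSet ↔ cycAEdge p ∈ B.edgeSet := by
  constructor
  · intro hr'
    by_contra hr
    have hl := (cycBEdge_mem_iff hP hB hR p).2 hr
    have h₁ := (hB.1.dir_or_dir hr').resolve_right (hB.not_of_eq_zero rfl)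
    have h₂ := (hB.1.dir_or_dir hl).resolve_left (hB.not_of_eq_zero rfl)
    have := hB.eq_of_eq_one rfl h₁ h₂
    exact nextOcc_ne_self hP hB hR p (by simpa [Prod.ext_iff] using this)
  · intro hr
    have hl := mt (cycBEdge_mem_iff hP hB hR p).1 (not_not.2 hr)
    obtain ⟨w, hw⟩ :=
      hB.exists_of_eq_one (show bvec n (.v (nextOcc cl p).1 false (nextOcc cl p).2) = 1 from rfl)
    rcases dirB_v_false_cases hP hB hR hw with rfl | ⟨q, hq, rfl⟩
    · exact hB.1.mem hw
    · obtain rfl := nextOcc_injective hq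
      exact absurd (by rw [cycBEdge, Sym2.eq_swap]; exact hB.1.mem hw) hl

lemma mEdge_mem_iff_cycAEdge_mem_or (p : Fin n × Fin 3) :
    (mEdge p false ∈ B.edgeSet ↔ cycAEdge p ∈ B.edgeSet) ∨
      (mEdge p true ∈ B.edgeSet ↔ cycAEdge p ∈ B.edgeSet) := by
  have hprev (q) (hq : nextOcc cl q = p) : cycAEdge q ∈ B.edgeSet ↔ cycAEdge p ∈ B.edgeSet :=
    hq ▸ (cycAEdge_nextOcc_mem_iff hP hB hR q).symm
  by_cases hr : cycAEdge p ∈ B.edgeSet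
  · have := mEdge_mem_or_of_cycBEdge_notMem hP.1 hP.2.2.1.connected
      (by rw [cycBEdge_mem_iff hP hB hR, not_not]; exact hr)
      (fun q hq => by rw [cycBEdge_mem_iff hP hB hR, not_not, hprev q hq]; exact hr)
    tauto
  · have := mEdge_mem_or_of_cycBEdge_notMem hP.2.1 hP.2.2.2.1.connected
      (by rw [hP.mem_right_iff (cycBEdge_mem_edgeSet p), not_not, cycBEdge_mem_iff hP hB hR]
          exact hr)
      (fun q hq => by
        rw [hP.mem_right_iff (cycBEdge_mem_edgeSet q), not_not, cycBEdge_mem_iff hP hB hR,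
          hprev q hq]
        exact hr)
    rw [hP.mem_right_iff (mEdge_mem_edgeSet _ _), hP.mem_right_iff (mEdge_mem_edgeSet _ _)] at this
    tauto

lemma not_mEdge_mem_iff_cycAEdge_mem_or (p : Fin n × Fin 3) :
    ¬(mEdge p true ∈ B.edgeSet ↔ cycAEdge p ∈ B.edgeSet) ∨
      ¬(mEdge (nextOcc cl p) false ∈ B.edgeSet ↔ cycAEdge (nextOcc cl p) ∈ B.edgeSet) := by
  have hnext := cycAEdge_nextOcc_mem_iff hP hB hR p
  by_cases hr : cycAEdge p ∈ B.edgeSet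
  · have := mEdge_mem_or_of_cycAEdge_notMem hP.2.1 hP.2.2.2.1.connected
      (hP.notMem_right hr) (hP.notMem_right (hnext.2 hr))
    rw [hP.mem_right_iff (mEdge_mem_edgeSet _ _), hP.mem_right_iff (mEdge_mem_edgeSet _ _)] at this
    tauto
  · have := mEdge_mem_or_of_cycAEdge_notMem hP.1 hP.2.2.1.connected hr (mt hnext.1 hr)
    tauto

lemma mEdge_nextOcc_mem_iff (p : Fin n × Fin 3) :
    mEdge (nextOcc cl p) false ∈ B.edgeSet ↔ mEdge p false ∈ B.edgeSet := by
  have key := Equiv.Perm.apply_iff_of_forall_or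
    (Equiv.ofBijective _ (Finite.injective_iff_bijective.1 nextOcc_injective))
    (mEdge_mem_iff_cycAEdge_mem_or hP hB hR) (not_mEdge_mem_iff_cycAEdge_mem_or hP hB hR) p
  have := cycAEdge_nextOcc_mem_iff hP hB hR p
  simp only [Equiv.ofBijective_apply] at key
  tauto

lemma exists_mEdge_mem_and_notMem (i : Fin n) :
    (∃ j, mEdge (i, j) false ∈ B.edgeSet) ∧ ∃ j, mEdge (i, j) false ∉ B.edgeSet := by
  refine ⟨exists_mEdge_mem_of_isAcyclic hP.2.2.1.isAcyclic hP.1 hB (fun _ => rfl)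
    (fun _ => (not_dir_to_s hP hB hR _).1), ?_⟩
  obtain ⟨j, hj⟩ := exists_mEdge_mem_of_isAcyclic hP.2.2.2.1.isAcyclic hP.2.1 hR (fun _ => rfl)
    (fun _ => (not_dir_to_s hP hB hR _).2)
  exact ⟨j, fun h => hP.notMem_right h hj⟩

end Partition

theorem stmt1_general {α : Type*} [DecidableEq α] {n : ℕ} (cl : Fin n → Fin 3 → α)
    (B R : SimpleGraph (GVert n))
    (hBR : IsBRPartition (gadgetGraph cl) (bvec n) (rvec n) B R) :
    ∃ c : α → Bool,
      (∀ p : Fin n × Fin 3, (c (cl p.1 p.2) = true ↔ mEdge p false ∈ B.edgeSet)) ∧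
      NAESatisfies cl c := by
  classical
  obtain ⟨hP, ⟨dB, hB⟩, ⟨dR, hR⟩⟩ := hBR
  have hc (p : Fin n × Fin 3) :
      (∃ q : Fin n × Fin 3, cl q.1 q.2 = cl p.1 p.2 ∧ mEdge q false ∈ B.edgeSet) ↔
        mEdge p false ∈ B.edgeSet :=
    ⟨fun ⟨_, hq, h⟩ => (iff_of_cl_eq (Q := (mEdge · false ∈ B.edgeSet))
      (mEdge_nextOcc_mem_iff hP hB hR) hq).1 h, fun h => ⟨p, rfl, h⟩⟩
  refine ⟨fun x =>
      decide (∃ q : Fin n × Fin 3, cl q.1 q.2 = x ∧ mEdge q false ∈ B.edgeSet),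
    fun p => by simpa using hc p, fun i => ?_⟩
  obtain ⟨⟨j, hj⟩, k, hk⟩ := exists_mEdge_mem_and_notMem hP hB hR i
  exact ⟨⟨j, by simpa using (hc (i, j)).2 hj⟩, ⟨k, by simpa using mt (hc (i, k)).1 hk⟩⟩

/-- From any `(b,r)`-partition, coloring each variable by the
color of (any of) its original matching edges is well defined (a single
coloring `c` works for all occurrences) and satisfies `Π`. -/
theorem stmt1 {α : Type*} [DecidableEq α] {n : ℕ} (cl : Fin n → Fin 3 → α)
    (hcl : ∀ i, Function.Injective (cl i)) (B R : SimpleGraph (GVert n))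
    (hBR : IsBRPartition (gadgetGraph cl) (bvec n) (rvec n) B R) :
    ∃ c : α → Bool,
      (∀ p : Fin n × Fin 3, (c (cl p.1 p.2) = true ↔ mEdge p false ∈ B.edgeSet)) ∧
      NAESatisfies cl c :=
  stmt1_general cl B R hBR
end

section
/- Let Π be an instance of NotAllEqual 3-SAT with n clauses and G(Π)=(V,E), b, r the associated construction. In every (b,r)-partition of E, with any b-orientation of the blue tree and r-orientation of the red tree, every edge incident to the special vertex s is oriented away from s. -/
/-!
The star at `s` has `6n` edges and every one of them is blue or red, while `s` must send out
`b(s) = 3n` blue and `r(s) = 3n` red arcs. The out-arcs at `s` of each colour lie among the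
edges of that colour at `s`, so the counts only add up if every edge at `s` leaves `s`.
-/

lemma Set.eq_and_eq_of_ncard_le_ncard_add_ncard {α : Type*} {A X C Y : Set α}
    (hAX : A ⊆ X) (hCY : C ⊆ Y) (hXY : Disjoint X Y) (hfin : (X ∪ Y).Finite)
    (hcard : (X ∪ Y).ncard ≤ A.ncard + C.ncard) : A = X ∧ C = Y := by
  have hX : X.Finite := hfin.subset Set.subset_union_left
  have hY : Y.Finite := hfin.subset Set.subset_union_right
  rw [Set.ncard_union_eq hXY hX hY] at hcard
  have hA : A.ncard ≤ X.ncard := Set.ncard_le_ncard hAX hX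
  have hC : C.ncard ≤ Y.ncard := Set.ncard_le_ncard hCY hY
  exact ⟨Set.eq_of_subset_of_ncard_le hAX (by omega) hX,
    Set.eq_of_subset_of_ncard_le hCY (by omega) hY⟩

lemma IsOrientation.setOf_subset_neighborSet {V : Type*} {B : SimpleGraph V}
    {dir : V → V → Prop} (h : IsOrientation B.edgeSet dir) (v : V) :
    {w | dir v w} ⊆ B.neighborSet v :=
  fun w hw => h.1 v w hw

lemma neighborSet_eq_union_of_edgeSet_eq_union {V : Type*} {G B R : SimpleGraph V}
    (hunion : B.edgeSet ∪ R.edgeSet = G.edgeSet) (v : V) :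
    G.neighborSet v = B.neighborSet v ∪ R.neighborSet v := by
  ext w
  change s(v, w) ∈ G.edgeSet ↔ s(v, w) ∈ B.edgeSet ∪ R.edgeSet
  rw [hunion]

lemma disjoint_neighborSet_of_disjoint_edgeSet {V : Type*} {B R : SimpleGraph V}
    (hdisj : Disjoint B.edgeSet R.edgeSet) (v : V) :
    Disjoint (B.neighborSet v) (R.neighborSet v) :=
  Set.disjoint_left.mpr fun w hB hR =>
    Set.disjoint_left.mp hdisj (show s(v, w) ∈ B.edgeSet from hB) hR

theorem orientedAway_of_ncard_neighborSet_le {V : Type*} {G B R : SimpleGraph V}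
    {db dr : V → V → Prop} (hdisj : Disjoint B.edgeSet R.edgeSet)
    (hunion : B.edgeSet ∪ R.edgeSet = G.edgeSet) (hb : IsOrientation B.edgeSet db)
    (hr : IsOrientation R.edgeSet dr) (v : V) (hfin : (G.neighborSet v).Finite)
    (hdeg : (G.neighborSet v).ncard ≤ Nat.card {w // db v w} + Nat.card {w // dr v w}) :
    ∀ w, (s(v, w) ∈ B.edgeSet → db v w) ∧ (s(v, w) ∈ R.edgeSet → dr v w) := by
  rw [neighborSet_eq_union_of_edgeSet_eq_union hunion] at hfin hdeg
  obtain ⟨hB, hR⟩ := Set.eq_and_eq_of_ncard_le_ncard_add_ncard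
    (hb.setOf_subset_neighborSet v) (hr.setOf_subset_neighborSet v)
    (disjoint_neighborSet_of_disjoint_edgeSet hdisj v) hfin hdeg
  intro w
  exact ⟨fun hw => (hB ▸ hw : w ∈ {w | db v w}), fun hw => (hR ▸ hw : w ∈ {w | dr v w})⟩

lemma gadgetGraph_neighborSet_s {α : Type*} [DecidableEq α] {n : ℕ}
    (cl : Fin n → Fin 3 → α) :
    (gadgetGraph cl).neighborSet GVert.s =
      Set.range (fun p : Fin n × Bool × Fin 3 => GVert.u p.1 p.2.1 p.2.2) := by
  ext w
  rw [SimpleGraph.mem_neighborSet, gadgetGraph, SimpleGraph.fromRel_adj, Set.mem_range]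
  constructor
  · rintro ⟨-, ⟨i, o, j⟩ | h⟩
    · exact ⟨(i, o, j), rfl⟩
    · cases h
  · rintro ⟨⟨i, o, j⟩, rfl⟩
    exact ⟨(nomatch ·), Or.inl (EdgeSpec.star i o j)⟩

lemma gadgetGraph_ncard_neighborSet_s {α : Type*} [DecidableEq α] {n : ℕ}
    (cl : Fin n → Fin 3 → α) : ((gadgetGraph cl).neighborSet GVert.s).ncard = 6 * n := by
  have hinj : Function.Injective (fun p : Fin n × Bool × Fin 3 => GVert.u p.1 p.2.1 p.2.2) := by
    rintro ⟨i, o, j⟩ ⟨i', o', j'⟩ h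
    cases h
    rfl
  rw [gadgetGraph_neighborSet_s, Set.ncard_range_of_injective hinj]
  simp only [Nat.card_eq_fintype_card, Fintype.card_prod, Fintype.card_fin, Fintype.card_bool]
  ring

theorem stmt4_general {α : Type*} [DecidableEq α] {n : ℕ} (cl : Fin n → Fin 3 → α)
    (B R : SimpleGraph (GVert n))
    (hpart : IsTreePartition (gadgetGraph cl) B R)
    (db dr : GVert n → GVert n → Prop)
    (hb : IsMOrientation B.edgeSet (bvec n) db)
    (hr : IsMOrientation R.edgeSet (rvec n) dr) :
    ∀ w, (gadgetGraph cl).Adj GVert.s w →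
      (s(GVert.s, w) ∈ B.edgeSet → db GVert.s w) ∧
      (s(GVert.s, w) ∈ R.edgeSet → dr GVert.s w) := by
  obtain ⟨-, -, -, -, hdisj, hunion⟩ := hpart
  have hfin : ((gadgetGraph cl).neighborSet GVert.s).Finite := by
    rw [gadgetGraph_neighborSet_s]
    exact Set.finite_range _
  have hdeg : ((gadgetGraph cl).neighborSet GVert.s).ncard ≤
      Nat.card {w // db GVert.s w} + Nat.card {w // dr GVert.s w} := by
    rw [gadgetGraph_ncard_neighborSet_s, hb.2, hr.2]
    simp only [bvec, rvec]
    omega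
  exact fun w _ => orientedAway_of_ncard_neighborSet_le hdisj hunion hb.1 hr.1 GVert.s hfin hdeg w

/-- In every `(b,r)`-partition of `G(Π)`, with any
`b`-orientation of the blue tree and `r`-orientation of the red tree, every
edge incident to the special vertex `s` is oriented away from `s`. -/
theorem stmt4 {α : Type*} [DecidableEq α] {n : ℕ} (cl : Fin n → Fin 3 → α)
    (hcl : ∀ i, Function.Injective (cl i)) (B R : SimpleGraph (GVert n))
    (hpart : IsTreePartition (gadgetGraph cl) B R)
    (db dr : GVert n → GVert n → Prop)
    (hb : IsMOrientation B.edgeSet (bvec n) db)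
    (hr : IsMOrientation R.edgeSet (rvec n) dr) :
    ∀ w, (gadgetGraph cl).Adj GVert.s w →
      (s(GVert.s, w) ∈ B.edgeSet → db GVert.s w) ∧
      (s(GVert.s, w) ∈ R.edgeSet → dr GVert.s w) :=
  stmt4_general cl B R hpart db dr hb hr
end

section
/- Let Π be an instance of NotAllEqual 3-SAT with n clauses and G(Π)=(V,E), b, r the associated construction. In every (b,r)-partition of E, with any b-orientation of the blue tree and r-orientation of the red tree, for every clause C (original or copy), each of the three arcs corresponding to the matching edges E^C is oriented from its endpoint in U^C towards its endpoint v^C. -/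
/-!
Superimposing the blue and red orientations gives an orientation of all of `E` with outdegree
`b + r`. In it `s` and the `u`-vertices emit `6n + 2 · 6n = 18n` arcs, each on a different edge
at one of these vertices; but there are only `18n` such edges (the star, the triangles and the
matchings). So every one of them, in particular every matching edge, is oriented away from `s`
or the `u`-vertices.
-/

open Finset

section Orientation

variable {V : Type*} {F F₁ F₂ : Set (Sym2 V)} {d d₁ d₂ : V → V → Prop}

theorem IsOrientation.asymm_s5 (hd : IsOrientation F d) {a b : V} (hab : d a b) : ¬d b a :=
  fun hba => (hd.2 a b (hd.1 a b hab)).2 ⟨hab, hba⟩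

theorem IsOrientation.not_of_disjoint (hd : IsOrientation F₂ d) (hF : Disjoint F₁ F₂) {a b : V}
    (hab : s(a, b) ∈ F₁) : ¬d a b :=
  fun h => Set.disjoint_left.1 hF hab (hd.1 a b h)

theorem IsOrientation.sup (hF : Disjoint F₁ F₂) (h₁ : IsOrientation F₁ d₁)
    (h₂ : IsOrientation F₂ d₂) : IsOrientation (F₁ ∪ F₂) (d₁ ⊔ d₂) := by
  refine ⟨fun a b hab => hab.imp (h₁.1 a b) (h₂.1 a b), fun a b hab => ?_⟩
  rcases hab with hab | hab
  · have hba : s(b, a) ∈ F₁ := Sym2.eq_swap ▸ hab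
    simpa [h₂.not_of_disjoint hF hab, h₂.not_of_disjoint hF hba] using h₁.2 a b hab
  · have hba : s(b, a) ∈ F₂ := Sym2.eq_swap ▸ hab
    simpa [h₁.not_of_disjoint hF.symm hab, h₁.not_of_disjoint hF.symm hba] using h₂.2 a b hab

theorem IsMOrientation.sup [Finite V] {m₁ m₂ : V → ℕ} (hF : Disjoint F₁ F₂)
    (h₁ : IsMOrientation F₁ m₁ d₁) (h₂ : IsMOrientation F₂ m₂ d₂) :
    IsMOrientation (F₁ ∪ F₂) (m₁ + m₂) (d₁ ⊔ d₂) := by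
  classical
  refine ⟨h₁.1.sup hF h₂.1, fun a => ?_⟩
  have hdisj : Disjoint (d₁ a) (d₂ a) := by
    rw [Pi.disjoint_iff]
    exact fun w => disjoint_iff.2 <| eq_bot_iff.2 fun ⟨h₁w, h₂w⟩ =>
      h₂.1.not_of_disjoint hF (h₁.1.1 a w h₁w) h₂w
  rw [Pi.add_apply, ← h₁.2 a, ← h₂.2 a, ← Nat.card_sum]
  exact Nat.card_congr (subtypeOrEquiv _ _ hdisj)

/-- Distinct arcs lie on distinct edges. -/
theorem IsOrientation.sum_card_out_le [Finite V] (hd : IsOrientation F d) (N : Finset V)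
    (K : Finset (Sym2 V)) (hK : ∀ a ∈ N, ∀ w, d a w → s(a, w) ∈ K) :
    ∑ a ∈ N, Nat.card {w // d a w} ≤ #K := by
  classical
  have := Fintype.ofFinite V
  calc ∑ a ∈ N, Nat.card {w // d a w} = #(N.sigma fun a => univ.filter (d a)) := by
        simp [card_sigma, Nat.card_eq_fintype_card, Fintype.card_subtype]
    _ ≤ #K := by
      refine card_le_card_of_injOn (fun p => s(p.1, p.2)) ?_ ?_
      · intro p hp
        simp only [coe_sigma, Set.mem_sigma_iff, mem_coe, mem_filter, mem_univ, true_and] at hp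
        exact hK _ hp.1 _ hp.2
      · rintro ⟨a, w⟩ hp ⟨a', w'⟩ hp' he
        simp only [coe_sigma, Set.mem_sigma_iff, mem_coe, mem_filter, mem_univ, true_and] at hp hp'
        rcases Sym2.eq_iff.1 he with ⟨rfl, rfl⟩ | ⟨rfl, rfl⟩
        · rfl
        · exact (hd.asymm_s5 hp.2 hp'.2).elim

end Orientation

section Gadget

variable {n : ℕ}

instance : Finite (GVert n) :=
  Finite.of_injective
    (fun x : GVert n => match x with
      | .s => (none : Option (Bool × Fin n × Bool × Fin 3))
      | .u i o j => some (false, i, o, j)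
      | .v i o j => some (true, i, o, j))
    (by rintro (_ | ⟨i, o, j⟩ | ⟨i, o, j⟩) (_ | ⟨i', o', j'⟩ | ⟨i', o', j'⟩) h <;> simp_all)

def starVerts (n : ℕ) : Finset (GVert n) :=
  insert .s (univ.image fun (i, o, j) => .u i o j)

def starEdges (n : ℕ) : Finset (Sym2 (GVert n)) :=
  univ.biUnion fun ((i, o, j) : Fin n × Bool × Fin 3) =>
    {s(GVert.s, GVert.u i o j), s(GVert.u i o j, GVert.u i o (j + 1)),
      s(GVert.u i o j, GVert.v i o j)}

theorem v_notMem_starVerts (i : Fin n) (o : Bool) (j : Fin 3) : GVert.v i o j ∉ starVerts n := by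
  simp [starVerts]

theorem sum_bvec_add_rvec_starVerts : ∑ a ∈ starVerts n, (bvec n + rvec n) a = 18 * n := by
  rw [starVerts, sum_insert (by simp), sum_image (by rintro ⟨i, o, j⟩ - ⟨i', o', j'⟩ - h; simp_all)]
  simp only [Pi.add_apply, bvec, rvec, sum_const, card_univ, Fintype.card_prod, Fintype.card_fin,
    Fintype.card_bool, smul_eq_mul]
  ring

theorem card_starEdges_le : #(starEdges n) ≤ 18 * n :=
  calc #(starEdges n) ≤ ∑ _ : Fin n × Bool × Fin 3, 3 := card_biUnion_le.trans <|
        sum_le_sum fun _ _ => card_le_three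
    _ = 18 * n := by
      simp only [sum_const, card_univ, Fintype.card_prod, Fintype.card_fin, Fintype.card_bool,
        smul_eq_mul]
      ring

theorem mem_starEdges_of_edgeSpec {α : Type*} [DecidableEq α] {cl : Fin n → Fin 3 → α}
    {a w : GVert n} (h : EdgeSpec cl a w) (ha : a ∈ starVerts n ∨ w ∈ starVerts n) :
    s(a, w) ∈ starEdges n := by
  have htri : ∀ j j' : Fin 3, j ≠ j' → j' = j + 1 ∨ j = j' + 1 := by decide
  rcases h with ⟨i, o, j⟩ | @⟨i, o, j, j', hj⟩ | ⟨i, o, j⟩ | p | p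
  · exact mem_biUnion.2 ⟨(i, o, j), mem_univ _, by simp⟩
  · rcases htri j j' hj with rfl | rfl
    · exact mem_biUnion.2 ⟨(i, o, j), mem_univ _, by simp⟩
    · exact mem_biUnion.2 ⟨(i, o, j'), mem_univ _, by simp [Sym2.eq_swap]⟩
  · exact mem_biUnion.2 ⟨(i, o, j), mem_univ _, by simp⟩
  all_goals simp [starVerts] at ha

theorem mem_starEdges_of_adj {α : Type*} [DecidableEq α] {cl : Fin n → Fin 3 → α}
    {a w : GVert n} (ha : a ∈ starVerts n) (h : (gadgetGraph cl).Adj a w) :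
    s(a, w) ∈ starEdges n := by
  obtain ⟨-, h | h⟩ := (SimpleGraph.fromRel_adj _ _ _).1 h
  · exact mem_starEdges_of_edgeSpec h (.inl ha)
  · exact Sym2.eq_swap ▸ mem_starEdges_of_edgeSpec h (.inr ha)

theorem not_v_to_u_of_isMOrientation {α : Type*} [DecidableEq α] {cl : Fin n → Fin 3 → α}
    {d : GVert n → GVert n → Prop}
    (hd : IsMOrientation (gadgetGraph cl).edgeSet (bvec n + rvec n) d)
    (i : Fin n) (o : Bool) (j : Fin 3) : ¬d (GVert.v i o j) (GVert.u i o j) := by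
  intro hvu
  have hK : ∀ a ∈ starVerts n, ∀ w, d a w →
      s(a, w) ∈ (starEdges n).erase s(GVert.u i o j, GVert.v i o j) := by
    refine fun a ha w haw => mem_erase.2 ⟨fun he => ?_, mem_starEdges_of_adj ha (hd.1.1 a w haw)⟩
    rcases Sym2.eq_iff.1 he with ⟨rfl, rfl⟩ | ⟨rfl, -⟩
    · exact hd.1.asymm_s5 haw hvu
    · exact v_notMem_starVerts i o j ha
  have hcount := hd.1.sum_card_out_le _ _ hK
  simp only [hd.2, sum_bvec_add_rvec_starVerts] at hcount
  have hmem : s(GVert.u i o j, GVert.v i o j) ∈ starEdges n :=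
    mem_biUnion.2 ⟨(i, o, j), mem_univ _, by simp⟩
  have := card_erase_of_mem hmem
  have := card_starEdges_le (n := n)
  have := i.pos
  omega

end Gadget

theorem stmt5_general {α : Type*} [DecidableEq α] {n : ℕ} (cl : Fin n → Fin 3 → α)
    (B R : SimpleGraph (GVert n))
    (hpart : IsTreePartition (gadgetGraph cl) B R)
    (db dr : GVert n → GVert n → Prop)
    (hb : IsMOrientation B.edgeSet (bvec n) db)
    (hr : IsMOrientation R.edgeSet (rvec n) dr) :
    ∀ (i : Fin n) (o : Bool) (j : Fin 3),
      (s(GVert.u i o j, GVert.v i o j) ∈ B.edgeSet →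
        db (GVert.u i o j) (GVert.v i o j)) ∧
      (s(GVert.u i o j, GVert.v i o j) ∈ R.edgeSet →
        dr (GVert.u i o j) (GVert.v i o j)) := by
  obtain ⟨-, -, -, -, hdisj, hunion⟩ := hpart
  have hd := hb.sup hdisj hr
  rw [hunion] at hd
  intro i o j
  refine ⟨fun he => ?_, fun he => ?_⟩
  · exact (hb.1.2 _ _ he).1.resolve_right fun hvu =>
      not_v_to_u_of_isMOrientation hd i o j (Or.inl hvu)
  · exact (hr.1.2 _ _ he).1.resolve_right fun hvu =>
      not_v_to_u_of_isMOrientation hd i o j (Or.inr hvu)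

/-- In every `(b,r)`-partition of `G(Π)`, with any
`b`-orientation of the blue tree and `r`-orientation of the red tree, every
matching edge `u^C v^C` of every clause gadget (original or copy) is oriented
from its endpoint in `U^C` towards its endpoint `v^C`. -/
theorem stmt5 {α : Type*} [DecidableEq α] {n : ℕ} (cl : Fin n → Fin 3 → α)
    (hcl : ∀ i, Function.Injective (cl i)) (B R : SimpleGraph (GVert n))
    (hpart : IsTreePartition (gadgetGraph cl) B R)
    (db dr : GVert n → GVert n → Prop)
    (hb : IsMOrientation B.edgeSet (bvec n) db)
    (hr : IsMOrientation R.edgeSet (rvec n) dr) :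
    ∀ (i : Fin n) (o : Bool) (j : Fin 3),
      (s(GVert.u i o j, GVert.v i o j) ∈ B.edgeSet →
        db (GVert.u i o j) (GVert.v i o j)) ∧
      (s(GVert.u i o j, GVert.v i o j) ∈ R.edgeSet →
        dr (GVert.u i o j) (GVert.v i o j)) :=
  stmt5_general cl B R hpart db dr hb hr
end

section
/- Let Π be an instance of NotAllEqual 3-SAT with n clauses and G(Π)=(V,E), b, r the associated construction. In every (b,r)-partition of E, for every clause C (original or copy), the subgraph of the blue spanning tree induced on {s} ∪ U^C is connected, and the subgraph of the red spanning tree induced on {s} ∪ U^C is connected. -/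
/-!
The four vertices `{s} ∪ U^C` span a copy of `K₄` in `G(Π)`: the three star edges at `s` and the
triangle on `U^C`. The blue and red trees restrict to two forests on these four vertices which
together cover the six edges of `K₄`. A forest on four vertices has at most three edges, so both
restrictions have exactly three edges, i.e. both are spanning trees of `{s} ∪ U^C`.
-/

namespace SimpleGraph

variable {V : Type*} {H : SimpleGraph V}

lemma IsAcyclic.exists_isTree_le [Nonempty V] (hH : H.IsAcyclic) : ∃ F, H ≤ F ∧ F.IsTree := by
  obtain ⟨F, hHF, -, hF⟩ := connected_top.exists_isTree_le_of_le_of_isAcyclic le_top hH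
  exact ⟨F, hHF, hF⟩

lemma IsAcyclic.card_edgeSet_add_one_le [Finite V] [Nonempty V] (hH : H.IsAcyclic) :
    Nat.card H.edgeSet + 1 ≤ Nat.card V := by
  obtain ⟨F, hHF, hF⟩ := hH.exists_isTree_le
  rw [← (isTree_iff_connected_and_card.mp hF).2, Nat.card_coe_set_eq, Nat.card_coe_set_eq]
  exact Nat.add_le_add_right (Set.ncard_le_ncard (edgeSet_mono hHF)) 1

lemma IsAcyclic.isTree_of_card_le_card_edgeSet_add_one [Finite V] [Nonempty V]
    (hH : H.IsAcyclic) (hcard : Nat.card V ≤ Nat.card H.edgeSet + 1) : H.IsTree := by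
  obtain ⟨F, hHF, hF⟩ := hH.exists_isTree_le
  have hFcard := (isTree_iff_connected_and_card.mp hF).2
  rw [Nat.card_coe_set_eq] at hFcard hcard
  have hedge : H.edgeSet = F.edgeSet :=
    Set.eq_of_subset_of_ncard_le (edgeSet_mono hHF) (by omega)
  rwa [edgeSet_injective hedge]

lemma isTree_and_isTree_of_sup_eq_top [Finite V] (hV : Nat.card V = 4) {A B : SimpleGraph V}
    (hA : A.IsAcyclic) (hB : B.IsAcyclic) (hAB : A ⊔ B = ⊤) : A.IsTree ∧ B.IsTree := by
  classical
  have : Fintype V := Fintype.ofFinite V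
  have : Nonempty V := Nat.card_pos_iff.mp (by omega) |>.1
  have htop : Nat.card (⊤ : SimpleGraph V).edgeSet = 6 := by
    rw [Nat.card_eq_fintype_card, ← edgeFinset_card, card_edgeFinset_top_eq_card_choose_two,
      ← Nat.card_eq_fintype_card, hV]
    rfl
  have hsum : Nat.card (⊤ : SimpleGraph V).edgeSet ≤
      Nat.card A.edgeSet + Nat.card B.edgeSet := by
    simp only [← hAB, edgeSet_sup, Nat.card_coe_set_eq]
    exact Set.ncard_union_le _ _
  have hAle := hA.card_edgeSet_add_one_le
  have hBle := hB.card_edgeSet_add_one_le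
  exact ⟨hA.isTree_of_card_le_card_edgeSet_add_one (by omega),
    hB.isTree_of_card_le_card_edgeSet_add_one (by omega)⟩

lemma isTree_induce_of_isClique {G A B : SimpleGraph V} (hAB : A ⊔ B = G) (hA : A.IsAcyclic)
    (hB : B.IsAcyclic) {S : Set V} (hS : G.IsClique S) (hcard : Nat.card S = 4) :
    (A.induce S).IsTree ∧ (B.induce S).IsTree := by
  have : Finite S := Nat.finite_of_card_ne_zero (by omega)
  refine isTree_and_isTree_of_sup_eq_top hcard (hA.induce S) (hB.induce S) ?_
  ext x y
  simp only [sup_adj, comap_adj, Function.Embedding.subtype_apply, top_adj]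
  refine ⟨fun h => Subtype.coe_ne_coe.mp (h.elim Adj.ne Adj.ne), fun hxy => ?_⟩
  rw [← sup_adj, hAB]
  exact hS x.2 y.2 (Subtype.coe_ne_coe.mpr hxy)

end SimpleGraph

section Gadget

variable {α : Type*} [DecidableEq α] {n : ℕ} (cl : Fin n → Fin 3 → α) (i : Fin n) (o : Bool)

/-- The paper's `{s} ∪ U^C`. -/
def clauseHub : Set (GVert n) :=
  {GVert.s} ∪ {w | ∃ j : Fin 3, w = GVert.u i o j}

lemma gadgetGraph_adj_s_u (j : Fin 3) : (gadgetGraph cl).Adj .s (.u i o j) :=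
  (SimpleGraph.fromRel_adj _ _ _).mpr ⟨nofun, .inl (.star i o j)⟩

lemma gadgetGraph_adj_u_u {j j' : Fin 3} (h : j ≠ j') :
    (gadgetGraph cl).Adj (.u i o j) (.u i o j') :=
  (SimpleGraph.fromRel_adj _ _ _).mpr ⟨fun h' => h (GVert.u.inj h').2.2, .inl (.tri i o h)⟩

lemma gadgetGraph_isClique_clauseHub : (gadgetGraph cl).IsClique (clauseHub i o) := by
  rintro x (rfl | ⟨j, rfl⟩) y (rfl | ⟨j', rfl⟩) hxy
  · exact absurd rfl hxy
  · exact gadgetGraph_adj_s_u cl i o j'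
  · exact (gadgetGraph_adj_s_u cl i o j).symm
  · exact gadgetGraph_adj_u_u cl i o fun h => hxy (h ▸ rfl)

lemma card_clauseHub : Nat.card (clauseHub (n := n) i o) = 4 := by
  have hS : clauseHub i o = insert .s (Set.range (GVert.u i o)) := by
    ext w
    simp only [clauseHub, Set.singleton_union, Set.mem_insert_iff, Set.mem_ofPred_eq,
      Set.mem_range, eq_comm]
  have hinj : Function.Injective (GVert.u (n := n) i o) := fun _ _ h => (GVert.u.inj h).2.2
  rw [Nat.card_coe_set_eq, hS, Set.ncard_insert_of_notMem (by simp),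
    Set.ncard_range_of_injective hinj, Nat.card_eq_fintype_card, Fintype.card_fin]

end Gadget

theorem stmt7_general {α : Type*} [DecidableEq α] {n : ℕ} (cl : Fin n → Fin 3 → α)
    (B R : SimpleGraph (GVert n))
    (hBR : IsBRPartition (gadgetGraph cl) (bvec n) (rvec n) B R) :
    ∀ (i : Fin n) (o : Bool),
      (B.induce ({GVert.s} ∪ {w | ∃ j : Fin 3, w = GVert.u i o j} :
        Set (GVert n))).Connected ∧
      (R.induce ({GVert.s} ∪ {w | ∃ j : Fin 3, w = GVert.u i o j} :
        Set (GVert n))).Connected := by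
  obtain ⟨⟨-, -, hB, hR, -, hunion⟩, -, -⟩ := hBR
  intro i o
  have hsup : B ⊔ R = gadgetGraph cl := SimpleGraph.edgeSet_injective (by
    rw [SimpleGraph.edgeSet_sup, hunion])
  obtain ⟨hBi, hRi⟩ := SimpleGraph.isTree_induce_of_isClique hsup hB.isAcyclic hR.isAcyclic
    (gadgetGraph_isClique_clauseHub cl i o) (card_clauseHub i o)
  exact ⟨hBi.connected, hRi.connected⟩

/-- In every `(b,r)`-partition of `G(Π)`, for every clause
gadget (original or copy), the subgraphs of the blue tree and of the red tree
induced on `{s} ∪ U^C` are connected. -/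
theorem stmt7 {α : Type*} [DecidableEq α] {n : ℕ} (cl : Fin n → Fin 3 → α)
    (hcl : ∀ i, Function.Injective (cl i)) (B R : SimpleGraph (GVert n))
    (hBR : IsBRPartition (gadgetGraph cl) (bvec n) (rvec n) B R) :
    ∀ (i : Fin n) (o : Bool),
      (B.induce ({GVert.s} ∪ {w | ∃ j : Fin 3, w = GVert.u i o j} :
        Set (GVert n))).Connected ∧
      (R.induce ({GVert.s} ∪ {w | ∃ j : Fin 3, w = GVert.u i o j} :
        Set (GVert n))).Connected :=
  stmt7_general cl B R hBR
end
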